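/- arXiv:1801.03484 — 5 statements merged into one kernel-verified Lean document; each statement's English description precedes it below -/
import Mathlib

section
/- Let θ_i > 0, let H and K be disjoint finite index sets, and let θ_j > 0 for every j ∈ H ∪ K. Then ∫_0^∞ (1/θ_i)·exp(−x/θ_i) · ∏_{j ∈ H} exp(−x/θ_j) · ∏_{k ∈ K} (1 − exp(−x/θ_k)) dx = Σ_{φ ⊆ K} (−1)^{|φ|} / ( θ_i · ( 1/θ_i + Σ_{j ∈ H} 1/θ_j + Σ_{p ∈ φ} 1/θ_p ) ), where the sum ranges over all subsets φ of K. -/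
/-!
Expanding `∏_{k ∈ K} (1 - e^{-x/θ_k})` over the subsets `φ ⊆ K` turns the integrand into a signed
sum of pure exponentials `e^{-c_φ x}` with `c_φ = 1/θ_i + ∑_{j ∈ H} 1/θ_j + ∑_{p ∈ φ} 1/θ_p > 0`,
and each of these integrates over `(0, ∞)` to `1 / c_φ`.
-/

open Finset Real MeasureTheory

lemma integral_Ioi_zero_sum_mul_exp_neg_mul {α : Type*} (s : Finset α) (a c : α → ℝ)
    (hc : ∀ t ∈ s, 0 < c t) :
    ∫ x in Set.Ioi (0 : ℝ), ∑ t ∈ s, a t * exp (-c t * x) = ∑ t ∈ s, a t / c t := by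
  rw [integral_finsetSum _ fun t ht ↦ (exp_neg_integrableOn_Ioi 0 (hc t ht)).const_mul (a t)]
  refine sum_congr rfl fun t ht ↦ ?_
  rw [integral_const_mul, integral_exp_mul_Ioi (neg_lt_zero.2 (hc t ht)), mul_zero, exp_zero,
    neg_div_neg_eq, mul_one_div]

lemma prod_exp_neg_div {ι : Type*} (s : Finset ι) (θ : ι → ℝ) (x : ℝ) :
    ∏ j ∈ s, exp (-x / θ j) = exp (-(∑ j ∈ s, 1 / θ j) * x) := by
  rw [← exp_sum, neg_mul, sum_mul, ← sum_neg_distrib]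
  exact congrArg exp (sum_congr rfl fun j _ ↦ by ring)

lemma expDensity_mul_tails_mul_cdfs_eq_sum {ι : Type*} [DecidableEq ι] (i : ι) (θ : ι → ℝ)
    (H K : Finset ι) (x : ℝ) :
    (1 / θ i) * exp (-x / θ i) * (∏ j ∈ H, exp (-x / θ j)) * (∏ k ∈ K, (1 - exp (-x / θ k))) =
      ∑ φ ∈ K.powerset, (-1) ^ φ.card / θ i *
        exp (-(1 / θ i + ∑ j ∈ H, 1 / θ j + ∑ p ∈ φ, 1 / θ p) * x) := by
  rw [prod_sub, mul_sum]
  refine sum_congr rfl fun φ _ ↦ ?_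
  rw [prod_const_one, mul_one, prod_exp_neg_div, prod_exp_neg_div,
    show -(1 / θ i + ∑ j ∈ H, 1 / θ j + ∑ p ∈ φ, 1 / θ p) * x =
      -x / θ i + -(∑ j ∈ H, 1 / θ j) * x + -(∑ p ∈ φ, 1 / θ p) * x by ring,
    exp_add, exp_add]
  ring

theorem integral_expDensity_mul_tails_mul_cdfs_general
    {ι : Type*} [DecidableEq ι] (i : ι) (θ : ι → ℝ) (H K : Finset ι)
    (hi : 0 < θ i) (hθ : ∀ j ∈ H ∪ K, 0 < θ j) :
    ∫ x in Set.Ioi (0 : ℝ),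
        (1 / θ i) * Real.exp (-x / θ i) *
          (∏ j ∈ H, Real.exp (-x / θ j)) *
          (∏ k ∈ K, (1 - Real.exp (-x / θ k))) =
      ∑ φ ∈ K.powerset,
        (-1 : ℝ) ^ φ.card /
          (θ i * (1 / θ i + ∑ j ∈ H, 1 / θ j + ∑ p ∈ φ, 1 / θ p)) := by
  have hrate : ∀ φ ∈ K.powerset, 0 < 1 / θ i + ∑ j ∈ H, 1 / θ j + ∑ p ∈ φ, 1 / θ p := by
    intro φ hφ
    have hH : 0 ≤ ∑ j ∈ H, 1 / θ j :=
      sum_nonneg fun j hj ↦ (one_div_pos.2 (hθ j (mem_union_left K hj))).le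
    have hφ : 0 ≤ ∑ p ∈ φ, 1 / θ p :=
      sum_nonneg fun p hp ↦ (one_div_pos.2 (hθ p (mem_union_right H (mem_powerset.1 hφ hp)))).le
    have := one_div_pos.2 hi
    linarith
  simp_rw [expDensity_mul_tails_mul_cdfs_eq_sum]
  rw [integral_Ioi_zero_sum_mul_exp_neg_mul _ _ _ hrate]
  simp_rw [div_div]

/-- The key integral identity of the ONETS regret analysis (Eq. (6) to Eq. (7)):
integrating arm `i`'s exponential density against the tails of the arms in `H`
and the CDFs of the arms in `K` gives an inclusion–exclusion closed form. -/
theorem integral_expDensity_mul_tails_mul_cdfs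
    {ι : Type*} [DecidableEq ι] (i : ι) (θ : ι → ℝ) (H K : Finset ι)
    (hHK : Disjoint H K) (hi : 0 < θ i) (hθ : ∀ j ∈ H ∪ K, 0 < θ j) :
    ∫ x in Set.Ioi (0 : ℝ),
        (1 / θ i) * Real.exp (-x / θ i) *
          (∏ j ∈ H, Real.exp (-x / θ j)) *
          (∏ k ∈ K, (1 - Real.exp (-x / θ k))) =
      ∑ φ ∈ K.powerset,
        (-1 : ℝ) ^ φ.card /
          (θ i * (1 / θ i + ∑ j ∈ H, 1 / θ j + ∑ p ∈ φ, 1 / θ p)) :=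
  integral_expDensity_mul_tails_mul_cdfs_general i θ H K hi hθ
end

section
/- Let I be a finite index set with a distinguished element i, let H and K be disjoint subsets of I \ {i}, let r : I → ℝ with r_j > 0 for all j, and let (X_j)_{j∈I} be independent random variables where X_j has the exponential distribution with rate r_j. Then the probability that X_j ≥ X_i for every j ∈ H and X_k ≤ X_i for every k ∈ K equals Σ_{φ ⊆ K} (−1)^{|φ|} · r_i / ( r_i + Σ_{j ∈ H} r_j + Σ_{p ∈ φ} r_p ). -/
/-!
Condition on the value `t` of `X i`. By independence, the remaining arms contribute
`∏_{j ∈ H} e^{-r_j t} · ∏_{k ∈ K} (1 - e^{-r_k t})`, to be integrated against the density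
`r_i e^{-r_i t}` on `(0, ∞)`. Expanding the product over `K` as a signed sum over subsets
`φ ⊆ K` turns the integrand into a combination of exponentials with rates
`r_i + Σ_H r_j + Σ_φ r_p`, and each of these integrates to `r_i` divided by its rate.
-/

open Finset Real MeasureTheory ProbabilityTheory Set
open scoped ENNReal

section ExponentialSums

variable {α : Type*} {s : Finset α} {a : α → ℝ}

lemma integrableOn_Ioi_sum_mul_exp_neg_mul (c : α → ℝ) (ha : ∀ x ∈ s, 0 < a x) :
    IntegrableOn (fun t => ∑ x ∈ s, c x * exp (-(a x * t))) (Ioi 0) :=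
  integrable_finsetSum _ fun x hx => by
    simpa only [neg_mul] using (exp_neg_integrableOn_Ioi 0 (ha x hx)).const_mul (c x)

lemma integral_Ioi_sum_mul_exp_neg_mul (c : α → ℝ) (ha : ∀ x ∈ s, 0 < a x) :
    ∫ t in Ioi 0, ∑ x ∈ s, c x * exp (-(a x * t)) = ∑ x ∈ s, c x / a x := by
  rw [integral_finsetSum _ fun x hx => by
    simpa only [neg_mul] using (exp_neg_integrableOn_Ioi 0 (ha x hx)).const_mul (c x)]
  refine sum_congr rfl fun x hx => ?_
  have h := integral_exp_mul_Ioi (neg_lt_zero.2 (ha x hx)) 0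
  simp only [neg_mul, mul_zero, exp_zero] at h
  rw [integral_const_mul, h]
  ring

end ExponentialSums

section InclusionExclusion

variable {ι : Type*}

lemma prod_one_sub_exp_neg_mul (K : Finset ι) (r : ι → ℝ) (t : ℝ) :
    ∏ k ∈ K, (1 - exp (-(r k * t))) =
      ∑ φ ∈ K.powerset, (-1) ^ #φ * exp (-((∑ p ∈ φ, r p) * t)) := by
  classical
  rw [prod_sub]
  refine sum_congr rfl fun φ _ => ?_
  rw [prod_const_one, mul_one, ← exp_sum, sum_mul, ← sum_neg_distrib]

lemma mul_exp_mul_prod_exp_mul_prod_one_sub_exp (H K : Finset ι) (r : ι → ℝ) (ri t : ℝ) :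
    ri * exp (-(ri * t)) * ((∏ j ∈ H, exp (-(r j * t))) * ∏ k ∈ K, (1 - exp (-(r k * t)))) =
      ∑ φ ∈ K.powerset,
        (-1) ^ #φ * ri * exp (-((ri + ∑ j ∈ H, r j + ∑ p ∈ φ, r p) * t)) := by
  have hH : ∏ j ∈ H, exp (-(r j * t)) = exp (-((∑ j ∈ H, r j) * t)) := by
    rw [← exp_sum, sum_mul, ← sum_neg_distrib]
  rw [hH, prod_one_sub_exp_neg_mul, mul_sum, mul_sum]
  refine sum_congr rfl fun φ _ => ?_
  rw [add_mul, add_mul, neg_add, neg_add, exp_add, exp_add]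
  ring

end InclusionExclusion

namespace ProbabilityTheory

section Independence

variable {Ω ι β : Type*} [MeasurableSpace Ω] [MeasurableSpace β] {μ : Measure Ω}
  [IsFiniteMeasure μ] {X : ι → Ω → β}

lemma iIndepFun.measure_forall_mem_eq_lintegral_prod
    (hindep : iIndepFun X μ) (hX : ∀ j, Measurable (X j)) {i : ι} {T : Finset ι} (hiT : i ∉ T)
    (s : ι → β → Set β) (hs : ∀ j, MeasurableSet {p : β × β | p.2 ∈ s j p.1}) :
    μ {ω | ∀ j ∈ T, X j ω ∈ s j (X i ω)} = ∫⁻ t, ∏ j ∈ T, μ (X j ⁻¹' s j t) ∂μ.map (X i) := by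
  classical
  let Z : Ω → T → β := fun ω j => X j ω
  have hZ : Measurable Z := measurable_pi_lambda _ fun j => hX j
  let E : Set (β × (T → β)) := {p | ∀ j : T, p.2 j ∈ s j p.1}
  have hE : MeasurableSet E := by
    simp only [E, Set.ofPred_forall]
    exact .iInter fun j =>
      (hs j).preimage (f := fun p : β × (T → β) => (p.1, p.2 j)) (by fun_prop)
  have hindep_Z : IndepFun (X i) Z μ :=
    (hindep.indepFun_finset {i} T (disjoint_singleton_left.2 hiT) hX).comp
      (measurable_pi_apply (⟨i, mem_singleton_self i⟩ : ({i} : Finset ι))) measurable_id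
  have hmap : μ.map (fun ω => (X i ω, Z ω)) = (μ.map (X i)).prod (μ.map Z) :=
    (indepFun_iff_map_prod_eq_prod_map_map (hX i).aemeasurable hZ.aemeasurable).1 hindep_Z
  have hslice (t : β) : μ.map Z (Prod.mk t ⁻¹' E) = ∏ j ∈ T, μ (X j ⁻¹' s j t) := by
    have hpre : Z ⁻¹' (Prod.mk t ⁻¹' E) = ⋂ j ∈ T, X j ⁻¹' s j t := by
      ext ω; simp [Z, E]
    rw [Measure.map_apply hZ (measurable_prodMk_left hE), hpre]
    exact hindep.meas_biInter fun j _ => ⟨s j t, measurable_prodMk_left (hs j), rfl⟩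
  calc μ {ω | ∀ j ∈ T, X j ω ∈ s j (X i ω)} = μ ((fun ω => (X i ω, Z ω)) ⁻¹' E) := by
        congr 1; ext ω; simp [Z, E]
    _ = ∫⁻ t, μ.map Z (Prod.mk t ⁻¹' E) ∂μ.map (X i) := by
        rw [← Measure.map_apply ((hX i).prodMk hZ) hE, hmap, Measure.prod_apply hE]
    _ = ∫⁻ t, ∏ j ∈ T, μ (X j ⁻¹' s j t) ∂μ.map (X i) := lintegral_congr hslice

end Independence

section Exponential

lemma expMeasure_absolutelyContinuous (r : ℝ) : expMeasure r ≪ volume :=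
  withDensity_absolutelyContinuous _ _

variable {r : ℝ}

lemma expMeasure_Iic_of_nonneg (hr : 0 < r) {t : ℝ} (ht : 0 ≤ t) :
    expMeasure r (Iic t) = ENNReal.ofReal (1 - exp (-(r * t))) := by
  have := isProbabilityMeasure_expMeasure hr
  rw [← ofReal_cdf, cdf_expMeasure_eq hr, if_pos ht]

lemma expMeasure_Ici_of_nonneg (hr : 0 < r) {t : ℝ} (ht : 0 ≤ t) :
    expMeasure r (Ici t) = ENNReal.ofReal (exp (-(r * t))) := by
  have := isProbabilityMeasure_expMeasure hr
  have hIio : expMeasure r (Iio t) = expMeasure r (Iic t) :=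
    measure_congr (Iio_ae_eq_Iic' (expMeasure_absolutelyContinuous r (measure_singleton t)))
  have hexp_le : exp (-(r * t)) ≤ 1 := exp_le_one_iff.2 (by nlinarith)
  rw [← compl_Iio, prob_compl_eq_one_sub measurableSet_Iio, hIio, expMeasure_Iic_of_nonneg hr ht,
    ← ENNReal.ofReal_one, ← ENNReal.ofReal_sub _ (by linarith), sub_sub_cancel]

lemma lintegral_expMeasure (F : ℝ → ℝ≥0∞) :
    ∫⁻ t, F t ∂expMeasure r = ∫⁻ t in Ioi 0, ENNReal.ofReal (r * exp (-(r * t))) * F t := by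
  have hpdf : Measurable (exponentialPDF r) := (measurable_exponentialPDFReal r).ennreal_ofReal
  have hsupp : Function.support (exponentialPDF r * F) ⊆ Ici 0 := fun t ht => by
    by_contra h
    exact ht (by simp [exponentialPDF_of_neg (not_le.1 h)])
  rw [show expMeasure r = volume.withDensity (exponentialPDF r) from rfl,
    lintegral_withDensity_eq_lintegral_mul_non_measurable _ hpdf
      (ae_of_all _ fun _ => ENNReal.ofReal_lt_top),
    ← setLIntegral_eq_of_support_subset hsupp, setLIntegral_congr Ioi_ae_eq_Ici.symm]
  exact setLIntegral_congr_fun measurableSet_Ioi fun t ht => by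
    rw [Pi.mul_apply, exponentialPDF_of_nonneg (le_of_lt ht)]

end Exponential

lemma lintegral_prod_expMeasure_Ici_mul_prod_expMeasure_Iic {ι : Type*} {H K : Finset ι} {r : ι → ℝ}
    {ri : ℝ} (hri : 0 < ri) (hrH : ∀ j ∈ H, 0 < r j) (hrK : ∀ k ∈ K, 0 < r k) :
    ∫⁻ t, (∏ j ∈ H, expMeasure (r j) (Ici t)) * ∏ k ∈ K, expMeasure (r k) (Iic t)
        ∂expMeasure ri =
      ENNReal.ofReal
        (∑ φ ∈ K.powerset, (-1 : ℝ) ^ #φ * ri / (ri + ∑ j ∈ H, r j + ∑ p ∈ φ, r p)) := by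
  let g : ℝ → ℝ := fun t =>
    ri * exp (-(ri * t)) * ((∏ j ∈ H, exp (-(r j * t))) * ∏ k ∈ K, (1 - exp (-(r k * t))))
  have hrate : ∀ φ ∈ K.powerset, 0 < ri + ∑ j ∈ H, r j + ∑ p ∈ φ, r p := fun φ hφ => by
    have := sum_nonneg fun j hj => (hrH j hj).le
    have := sum_nonneg fun p hp => (hrK p (mem_powerset.1 hφ hp)).le
    linarith
  have hK_nonneg {t : ℝ} (ht : 0 ≤ t) : ∀ k ∈ K, 0 ≤ 1 - exp (-(r k * t)) := fun k hk =>
    sub_nonneg.2 (exp_le_one_iff.2 (neg_nonpos.2 (mul_nonneg (hrK k hk).le ht)))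
  have hg : g = fun t => ∑ φ ∈ K.powerset,
      (-1) ^ #φ * ri * exp (-((ri + ∑ j ∈ H, r j + ∑ p ∈ φ, r p) * t)) :=
    funext (mul_exp_mul_prod_exp_mul_prod_one_sub_exp H K r ri)
  have hg_int : IntegrableOn g (Ioi 0) := hg ▸ integrableOn_Ioi_sum_mul_exp_neg_mul _ hrate
  have hg_nonneg : 0 ≤ᵐ[volume.restrict (Ioi 0)] g :=
    (ae_restrict_iff' measurableSet_Ioi).2 (ae_of_all _ fun t (ht : 0 < t) => by
      have := prod_nonneg (hK_nonneg ht.le)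
      positivity)
  calc _ = ∫⁻ t in Ioi 0, ENNReal.ofReal (g t) := by
        rw [lintegral_expMeasure]
        refine setLIntegral_congr_fun measurableSet_Ioi fun t (ht : 0 < t) => ?_
        rw [prod_congr rfl fun j hj => expMeasure_Ici_of_nonneg (hrH j hj) ht.le,
          prod_congr rfl fun k hk => expMeasure_Iic_of_nonneg (hrK k hk) ht.le,
          ← ENNReal.ofReal_prod_of_nonneg fun j _ => (exp_pos _).le,
          ← ENNReal.ofReal_prod_of_nonneg (hK_nonneg ht.le),
          ← ENNReal.ofReal_mul (prod_nonneg fun j _ => (exp_pos _).le),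
          ← ENNReal.ofReal_mul (by positivity)]
    _ = ENNReal.ofReal (∫ t in Ioi 0, g t) :=
        (ofReal_integral_eq_lintegral_ofReal hg_int hg_nonneg).symm
    _ = _ := by rw [hg, integral_Ioi_sum_mul_exp_neg_mul _ hrate]

end ProbabilityTheory

/-- For independent exponential random variables `X_j` with rates `r_j` (`j ∈ I`),
and disjoint `H, K ⊆ I ∖ {i}`, the probability that every arm in `H` exceeds `X_i`
while every arm in `K` falls below `X_i` equals the inclusion–exclusion sum
`Σ_{φ ⊆ K} (−1)^{|φ|} r_i / (r_i + Σ_{j∈H} r_j + Σ_{p∈φ} r_p)`. -/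
theorem prob_exceed_and_below_eq_inclusion_exclusion
    {Ω : Type*} [MeasurableSpace Ω] (μ : Measure Ω) [IsProbabilityMeasure μ]
    {ι : Type*} [DecidableEq ι] (I : Finset ι) (i : ι) (hi : i ∈ I)
    (H K : Finset ι) (hH : H ⊆ I \ {i}) (hK : K ⊆ I \ {i}) (hHK : Disjoint H K)
    (r : ι → ℝ) (hr : ∀ j ∈ I, 0 < r j)
    (X : ι → Ω → ℝ) (hX : ∀ j, Measurable (X j))
    (hindep : iIndepFun X μ)
    (hlaw : ∀ j ∈ I, Measure.map (X j) μ = expMeasure (r j)) :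
    μ {ω | (∀ j ∈ H, X i ω ≤ X j ω) ∧ (∀ k ∈ K, X k ω ≤ X i ω)} =
      ENNReal.ofReal
        (∑ φ ∈ K.powerset,
          (-1 : ℝ) ^ φ.card * r i / (r i + ∑ j ∈ H, r j + ∑ p ∈ φ, r p)) := by
  have hHI : ∀ j ∈ H, j ∈ I := fun j hj => (mem_sdiff.1 (hH hj)).1
  have hKI : ∀ k ∈ K, k ∈ I := fun k hk => (mem_sdiff.1 (hK hk)).1
  have hiT : i ∉ H ∪ K := fun h => by simpa using union_subset hH hK h
  let side : ι → ℝ → Set ℝ := fun j t => if j ∈ H then Ici t else Iic t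
  have hside : ∀ j, MeasurableSet {p : ℝ × ℝ | p.2 ∈ side j p.1} := fun j => by
    by_cases hj : j ∈ H
    · simpa [side, hj] using measurableSet_le measurable_fst measurable_snd
    · simpa [side, hj] using measurableSet_le measurable_snd measurable_fst
  have hevent : {ω | (∀ j ∈ H, X i ω ≤ X j ω) ∧ (∀ k ∈ K, X k ω ≤ X i ω)} =
      {ω | ∀ j ∈ H ∪ K, X j ω ∈ side j (X i ω)} := by
    ext ω
    simp only [Set.mem_ofPred_eq, Finset.mem_union, or_imp, forall_and]
    refine and_congr (forall₂_congr fun j hj => by simp [side, hj]) (forall₂_congr fun k hk => ?_)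
    simp [side, disjoint_right.1 hHK hk]
  calc _ = ∫⁻ t, ∏ j ∈ H ∪ K, μ (X j ⁻¹' side j t) ∂expMeasure (r i) := by
        rw [hevent, hindep.measure_forall_mem_eq_lintegral_prod hX hiT side hside, hlaw i hi]
    _ = ∫⁻ t, (∏ j ∈ H, expMeasure (r j) (Ici t)) * ∏ k ∈ K, expMeasure (r k) (Iic t)
          ∂expMeasure (r i) := by
        refine lintegral_congr fun t => ?_
        rw [prod_union hHK]
        congr 1 <;> refine prod_congr rfl fun j hj => ?_
        · simp only [side, if_pos hj]
          rw [← Measure.map_apply (hX j) measurableSet_Ici, hlaw j (hHI j hj)]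
        · simp only [side, if_neg (disjoint_right.1 hHK hj)]
          rw [← Measure.map_apply (hX j) measurableSet_Iic, hlaw j (hKI j hj)]
    _ = _ := lintegral_prod_expMeasure_Ici_mul_prod_expMeasure_Iic (hr i hi)
        (fun j hj => hr j (hHI j hj)) (fun k hk => hr k (hKI k hk))
end

section
/- Let A be a finite index set, let i ∉ A be a distinguished index, let r_i > 0 and r_j > 0 for all j ∈ A, let (X_j)_{j ∈ A ∪ {i}} be independent random variables where each X_j has the exponential distribution with rate r_j, and let m be a natural number. Then the probability that at most m of the variables X_j with j ∈ A satisfy X_j ≥ X_i equals Σ_{H ⊆ A, |H| ≤ m} Σ_{φ ⊆ A∖H} (−1)^{|φ|} · r_i / ( r_i + Σ_{j ∈ H} r_j + Σ_{p ∈ φ} r_p ). -/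
/-!
Conditioning on `X i`, independence gives `P(X i ≤ X j for all j ∈ S) = E[exp(-(∑_{j ∈ S} r j) X i)]`,
since the minimum of independent exponentials is exponential with the summed rate; this Laplace
transform of `Exp(r i)` equals `r i / (r i + ∑_{j ∈ S} r j)`. By inclusion–exclusion over the
variables `φ ⊆ A \ H` that also exceed `X i`, the probability that exactly those indexed by `H`
exceed it is the alternating sum of these quantities for `S = H ∪ φ`, and the event in question is
the disjoint union of these events over `|H| ≤ m`.
-/

open Finset Real MeasureTheory ProbabilityTheory
open scoped ENNReal

lemma expMeasure_eq_withDensity (r : ℝ) :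
    expMeasure r = volume.withDensity (exponentialPDF r) := rfl

lemma lintegral_Ici_ofReal_mul_exp_neg {k c x : ℝ} (hk : 0 ≤ k) (hc : 0 < c) :
    ∫⁻ y in Set.Ici x, ENNReal.ofReal (k * exp (-(c * y))) =
      ENNReal.ofReal (k / c * exp (-(c * x))) := by
  simp_rw [← neg_mul]
  have hint : IntegrableOn (fun y => k * exp (-c * y)) (Set.Ici x) :=
    ((integrableOn_Ici_iff_integrableOn_Ioi).mpr
      (integrableOn_exp_mul_Ioi (neg_lt_zero.mpr hc) x)).const_mul k
  rw [← ofReal_integral_eq_lintegral_ofReal hint (ae_of_all _ fun y => by positivity),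
    integral_Ici_eq_integral_Ioi, integral_const_mul, integral_exp_mul_Ioi (neg_lt_zero.mpr hc)]
  congr 1
  field_simp

lemma expMeasure_Ici {r x : ℝ} (hr : 0 < r) (hx : 0 ≤ x) :
    expMeasure r (Set.Ici x) = ENNReal.ofReal (exp (-(r * x))) := by
  rw [expMeasure_eq_withDensity, withDensity_apply _ measurableSet_Ici,
    setLIntegral_congr_fun measurableSet_Ici fun y hy => exponentialPDF_of_nonneg (hx.trans hy),
    lintegral_Ici_ofReal_mul_exp_neg hr.le hr, div_self hr.ne', one_mul]

lemma lintegral_expMeasure_of_eqOn_Ici {a b : ℝ} (ha : 0 < a) (hb : 0 ≤ b) {g : ℝ → ℝ≥0∞}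
    (hg : ∀ x, 0 ≤ x → g x = ENNReal.ofReal (exp (-(b * x)))) :
    ∫⁻ x, g x ∂expMeasure a = ENNReal.ofReal (a / (a + b)) := by
  have hpdf : Measurable (exponentialPDF a) := (measurable_exponentialPDFReal a).ennreal_ofReal
  have hprod : exponentialPDF a * g =
      (Set.Ici 0).indicator fun x => ENNReal.ofReal (a * exp (-((a + b) * x))) := by
    ext x
    by_cases hx : 0 ≤ x
    · rw [Pi.mul_apply, Set.indicator_of_mem (Set.mem_Ici.mpr hx), exponentialPDF_of_nonneg hx,
        hg x hx, ← ENNReal.ofReal_mul (by positivity), mul_assoc, ← exp_add]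
      ring_nf
    · rw [Pi.mul_apply, Set.indicator_of_notMem (mt Set.mem_Ici.mp hx),
        exponentialPDF_of_neg (not_le.mp hx), zero_mul]
  rw [expMeasure_eq_withDensity, lintegral_withDensity_eq_lintegral_mul_non_measurable _ hpdf
    (ae_of_all _ fun _ => ENNReal.ofReal_lt_top), hprod, lintegral_indicator measurableSet_Ici,
    lintegral_Ici_ofReal_mul_exp_neg ha.le (by positivity)]
  simp

lemma setOf_filter_eq_inter_biInter {Ω ι : Type*} [DecidableEq ι] {A H : Finset ι} (hH : H ⊆ A)
    (P : ι → Ω → Prop) [∀ j ω, Decidable (P j ω)] :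
    {ω | A.filter (P · ω) = H} = (⋂ j ∈ H, {ω | P j ω}) ∩ ⋂ j ∈ A \ H, {ω | P j ω}ᶜ := by
  ext ω
  simp only [Set.mem_ofPred_eq, Set.mem_inter_iff, Set.mem_iInter, Set.mem_compl_iff,
    Finset.ext_iff, mem_filter, mem_sdiff]
  constructor
  · intro h
    exact ⟨fun j hj => ((h j).mpr hj).2, fun j hj hP => hj.2 ((h j).mp ⟨hj.1, hP⟩)⟩
  · rintro ⟨hin, hout⟩ j
    exact ⟨fun hj => by_contra fun hjH => hout j ⟨hj.1, hjH⟩ hj.2, fun hj => ⟨hH hj, hin j hj⟩⟩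

section

variable {Ω ι : Type*} [MeasurableSpace Ω] {μ : Measure Ω}

lemma measurableSet_setOf_filter_eq [DecidableEq ι] {P : ι → Ω → Prop}
    [∀ j ω, Decidable (P j ω)] (hP : ∀ j, MeasurableSet {ω | P j ω}) (A H : Finset ι) :
    MeasurableSet {ω | A.filter (P · ω) = H} := by
  by_cases hH : H ⊆ A
  · rw [setOf_filter_eq_inter_biInter hH]
    exact (H.measurableSet_biInter fun j _ => hP j).inter
      ((A \ H).measurableSet_biInter fun j _ => (hP j).compl)
  · convert MeasurableSet.empty
    exact Set.eq_empty_of_forall_notMem fun ω hω => hH (hω ▸ filter_subset _ A)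

lemma measureReal_inter_biInter_compl [IsFiniteMeasure μ] {C : ι → Set Ω}
    (hC : ∀ j, MeasurableSet (C j)) {B : Set Ω} (hB : MeasurableSet B) (T : Finset ι) :
    μ.real (B ∩ ⋂ j ∈ T, (C j)ᶜ) =
      ∑ φ ∈ T.powerset, (-1 : ℝ) ^ #φ * μ.real (B ∩ ⋂ j ∈ φ, C j) := by
  have hdiff : B ∩ ⋂ j ∈ T, (C j)ᶜ = B \ ⋃ j ∈ T, (B ∩ C j) := by
    rw [← Set.inter_iUnion₂, Set.sdiff_self_inter, Set.sdiff_eq, Set.compl_iUnion₂]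
  have hinter : ∀ φ : Finset ι, φ.Nonempty → ⋂ j ∈ φ, (B ∩ C j) = B ∩ ⋂ j ∈ φ, C j :=
    fun φ hφ => by simpa using Set.inter_biInter (coe_nonempty.mpr hφ) C B
  have hempty : {φ ∈ T.powerset | ¬φ.Nonempty} = {∅} := by
    ext φ; simp +contextual [not_nonempty_iff_eq_empty]
  rw [hdiff, measureReal_sdiff (Set.iUnion₂_subset fun j _ => Set.inter_subset_left)
    (T.measurableSet_biUnion fun j _ => hB.inter (hC j)),
    measureReal_biUnion_eq_sum_powerset fun j _ => hB.inter (hC j),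
    ← sum_filter_not_add_sum_filter T.powerset Finset.Nonempty, hempty, sum_singleton,
    sub_eq_add_neg, ← sum_neg_distrib]
  congr 1
  · simp
  · refine sum_congr rfl fun φ hφ => ?_
    rw [hinter φ (mem_filter.mp hφ).2, pow_succ]
    ring

lemma ProbabilityTheory.IndepFun.measure_preimage_eq_lintegral {β γ : Type*}
    [MeasurableSpace β] [MeasurableSpace γ] [IsFiniteMeasure μ] {Y : Ω → β} {W : Ω → γ}
    (h : IndepFun Y W μ) (hY : Measurable Y) (hW : Measurable W) {s : Set (β × γ)}
    (hs : MeasurableSet s) :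
    μ ((fun ω => (Y ω, W ω)) ⁻¹' s) = ∫⁻ y, μ (W ⁻¹' (Prod.mk y ⁻¹' s)) ∂μ.map Y := by
  rw [← Measure.map_apply (hY.prodMk hW) hs,
    h.map_prod_eq_prod_map_map hY.aemeasurable hW.aemeasurable, Measure.prod_apply hs]
  simp_rw [Measure.map_apply hW (measurable_prodMk_left hs)]

namespace ProbabilityTheory.iIndepFun

variable {X : ι → Ω → ℝ}

lemma indepFun_finset_of_notMem [DecidableEq ι] (hindep : iIndepFun X μ)
    (hX : ∀ j, Measurable (X j)) {S : Finset ι} {i : ι} (hi : i ∉ S) :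
    IndepFun (X i) (fun ω (j : S) => X j ω) μ :=
  (hindep.indepFun_finset {i} S (disjoint_singleton_left.mpr hi) hX).comp
    (measurable_pi_apply (⟨i, mem_singleton_self i⟩ : ({i} : Finset ι))) measurable_id

lemma measure_biInter_Ici_of_expMeasure (hindep : iIndepFun X μ) (hX : ∀ j, Measurable (X j))
    {S : Finset ι} {r : ι → ℝ} (hr : ∀ j ∈ S, 0 < r j)
    (hlaw : ∀ j ∈ S, μ.map (X j) = expMeasure (r j)) {x : ℝ} (hx : 0 ≤ x) :
    μ (⋂ j ∈ S, X j ⁻¹' Set.Ici x) = ENNReal.ofReal (exp (-((∑ j ∈ S, r j) * x))) := by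
  have htail : ∀ j ∈ S, μ (X j ⁻¹' Set.Ici x) = ENNReal.ofReal (exp (-(r j * x))) :=
    fun j hj => by
      rw [← Measure.map_apply (hX j) measurableSet_Ici, hlaw j hj, expMeasure_Ici (hr j hj) hx]
  rw [hindep.meas_biInter fun j _ => ⟨Set.Ici x, measurableSet_Ici, rfl⟩, prod_congr rfl htail,
    ← ENNReal.ofReal_prod_of_nonneg fun j _ => (exp_pos _).le, ← exp_sum, sum_mul,
    ← sum_neg_distrib]

lemma measure_biInter_le_of_expMeasure [DecidableEq ι] (hindep : iIndepFun X μ)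
    (hX : ∀ j, Measurable (X j)) {S : Finset ι} {i : ι} (hi : i ∉ S) {r : ι → ℝ}
    (hr : ∀ j ∈ insert i S, 0 < r j) (hlaw : ∀ j ∈ insert i S, μ.map (X j) = expMeasure (r j)) :
    μ (⋂ j ∈ S, {ω | X i ω ≤ X j ω}) = ENNReal.ofReal (r i / (r i + ∑ j ∈ S, r j)) := by
  have := hindep.isProbabilityMeasure
  have hrS : ∀ j ∈ S, 0 < r j := fun j hj => hr j (mem_insert_of_mem hj)
  have hs : MeasurableSet {p : ℝ × (S → ℝ) | ∀ j, p.1 ≤ p.2 j} := by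
    simp only [Set.ofPred_forall]
    exact MeasurableSet.iInter fun j =>
      measurableSet_le measurable_fst ((measurable_pi_apply j).comp measurable_snd)
  calc μ (⋂ j ∈ S, {ω | X i ω ≤ X j ω})
      = μ ((fun ω => (X i ω, fun j : S => X j ω)) ⁻¹' {p | ∀ j, p.1 ≤ p.2 j}) := by
        congr 1; ext ω; simp
    _ = ∫⁻ x, μ (⋂ j ∈ S, X j ⁻¹' Set.Ici x) ∂μ.map (X i) := by
        rw [(hindep.indepFun_finset_of_notMem hX hi).measure_preimage_eq_lintegral (hX i)
          (measurable_pi_lambda _ fun j => hX j) hs]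
        congr! 3 with x; ext ω; simp
    _ = ENNReal.ofReal (r i / (r i + ∑ j ∈ S, r j)) := by
        rw [hlaw i (mem_insert_self i S)]
        exact lintegral_expMeasure_of_eqOn_Ici (hr i (mem_insert_self i S))
          (sum_nonneg fun j hj => (hrS j hj).le)
          fun x hx => hindep.measure_biInter_Ici_of_expMeasure hX hrS
            (fun j hj => hlaw j (mem_insert_of_mem hj)) hx

lemma measureReal_setOf_filter_le_eq_of_expMeasure [DecidableEq ι] (hindep : iIndepFun X μ)
    (hX : ∀ j, Measurable (X j)) {A H : Finset ι} (hH : H ⊆ A) {i : ι} (hi : i ∉ A)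
    {r : ι → ℝ} (hr : ∀ j ∈ insert i A, 0 < r j)
    (hlaw : ∀ j ∈ insert i A, μ.map (X j) = expMeasure (r j)) :
    μ.real {ω | A.filter (fun j => X i ω ≤ X j ω) = H} =
      ∑ φ ∈ (A \ H).powerset, (-1 : ℝ) ^ #φ * r i / (r i + ∑ j ∈ H, r j + ∑ p ∈ φ, r p) := by
  have := hindep.isProbabilityMeasure
  have hC : ∀ j, MeasurableSet {ω | X i ω ≤ X j ω} := fun j => measurableSet_le (hX i) (hX j)
  rw [setOf_filter_eq_inter_biInter hH, measureReal_inter_biInter_compl hC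
    (H.measurableSet_biInter fun j _ => hC j)]
  refine sum_congr rfl fun φ hφ => ?_
  rw [mem_powerset] at hφ
  have hHφ : H ∪ φ ⊆ A := union_subset hH (hφ.trans sdiff_subset)
  have hsum : 0 ≤ ∑ j ∈ H ∪ φ, r j :=
    sum_nonneg fun j hj => (hr j (mem_insert_of_mem (hHφ hj))).le
  have hri : 0 < r i := hr i (mem_insert_self i A)
  have hsub : insert i (H ∪ φ) ⊆ insert i A := insert_subset_insert i hHφ
  rw [← set_biInter_inter, measureReal_def, hindep.measure_biInter_le_of_expMeasure hX
      (fun h => hi (hHφ h)) (fun j hj => hr j (hsub hj)) (fun j hj => hlaw j (hsub hj)),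
    ENNReal.toReal_ofReal (div_nonneg hri.le (add_nonneg hri.le hsum)),
    sum_union (disjoint_of_subset_right hφ disjoint_sdiff), mul_div_assoc, add_assoc]

end ProbabilityTheory.iIndepFun

end

theorem prob_atMost_exceed_eq_double_sum_general
    {Ω : Type*} [MeasurableSpace Ω] (μ : Measure Ω)
    {ι : Type*} [DecidableEq ι] (A : Finset ι) (i : ι) (hi : i ∉ A)
    (r : ι → ℝ) (hr : ∀ j ∈ insert i A, 0 < r j)
    (X : ι → Ω → ℝ) (hX : ∀ j, Measurable (X j))
    (hindep : iIndepFun X μ)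
    (hlaw : ∀ j ∈ insert i A, Measure.map (X j) μ = expMeasure (r j))
    (m : ℕ) :
    μ {ω | (A.filter (fun j => X i ω ≤ X j ω)).card ≤ m} =
      ENNReal.ofReal
        (∑ H ∈ A.powerset.filter (fun H => H.card ≤ m),
          ∑ φ ∈ (A \ H).powerset,
            (-1 : ℝ) ^ φ.card * r i / (r i + ∑ j ∈ H, r j + ∑ p ∈ φ, r p)) := by
  have := hindep.isProbabilityMeasure
  set F : Ω → Finset ι := fun ω => A.filter (fun j => X i ω ≤ X j ω)
  set 𝓗 := A.powerset.filter (fun H => H.card ≤ m)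
  have hfiber : ∀ H ∈ 𝓗, MeasurableSet (F ⁻¹' {H}) := fun H _ =>
    measurableSet_setOf_filter_eq (fun j => measurableSet_le (hX i) (hX j)) A H
  calc μ {ω | #(F ω) ≤ m} = μ (F ⁻¹' 𝓗) := by
        congr 1; ext ω; simp [F, 𝓗, filter_subset]
    _ = ∑ H ∈ 𝓗, μ (F ⁻¹' {H}) := (sum_measure_preimage_singleton 𝓗 hfiber).symm
    _ = ENNReal.ofReal (∑ H ∈ 𝓗, μ.real (F ⁻¹' {H})) := by
        rw [ENNReal.ofReal_sum_of_nonneg fun _ _ => measureReal_nonneg]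
        simp [ofReal_measureReal]
    _ = _ := by
        refine congrArg ENNReal.ofReal (sum_congr rfl fun H hH => ?_)
        exact hindep.measureReal_setOf_filter_le_eq_of_expMeasure hX
          (mem_powerset.mp (mem_filter.mp hH).1) hi hr hlaw

/-- For independent exponential random variables `X_j` (`j ∈ A ∪ {i}`) with rates `r_j`,
the probability that at most `m` of the variables indexed by `A` exceed `X_i` equals
the double inclusion–exclusion sum
`Σ_{H ⊆ A, |H| ≤ m} Σ_{φ ⊆ A∖H} (−1)^{|φ|} r_i / (r_i + Σ_{j∈H} r_j + Σ_{p∈φ} r_p)`. -/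
theorem prob_atMost_exceed_eq_double_sum
    {Ω : Type*} [MeasurableSpace Ω] (μ : Measure Ω) [IsProbabilityMeasure μ]
    {ι : Type*} [DecidableEq ι] (A : Finset ι) (i : ι) (hi : i ∉ A)
    (r : ι → ℝ) (hr : ∀ j ∈ insert i A, 0 < r j)
    (X : ι → Ω → ℝ) (hX : ∀ j, Measurable (X j))
    (hindep : iIndepFun X μ)
    (hlaw : ∀ j ∈ insert i A, Measure.map (X j) μ = expMeasure (r j))
    (m : ℕ) :
    μ {ω | (A.filter (fun j => X i ω ≤ X j ω)).card ≤ m} =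
      ENNReal.ofReal
        (∑ H ∈ A.powerset.filter (fun H => H.card ≤ m),
          ∑ φ ∈ (A \ H).powerset,
            (-1 : ℝ) ^ φ.card * r i / (r i + ∑ j ∈ H, r j + ∑ p ∈ φ, r p)) :=
  prob_atMost_exceed_eq_double_sum_general μ A i hi r hr X hX hindep hlaw m
end

section
/- Let A be a finite index set, let i ∉ A, and let r_i > 0 and r_j > 0 for all j ∈ A be positive reals. Then Σ_{H ⊆ A} Σ_{φ ⊆ A∖H} (−1)^{|φ|} · r_i / ( r_i + Σ_{j ∈ H} r_j + Σ_{p ∈ φ} r_p ) = 1, where the outer sum ranges over all subsets H of A and the inner sum over all subsets φ of A \ H. -/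
/-!
Regroup the double sum by `S = H ∪ φ`: the denominator depends only on `S`, so the terms
belonging to `S` carry the factor `∑ φ ⊆ S, (-1) ^ #φ`, which vanishes unless `S = ∅`.
The surviving term is `r i / r i = 1`.
-/

open Finset

namespace Finset

variable {ι : Type*} [DecidableEq ι]

theorem sum_powerset_sum_powerset_sdiff {M : Type*} [AddCommMonoid M]
    (A : Finset ι) (f : Finset ι → Finset ι → M) :
    ∑ H ∈ A.powerset, ∑ φ ∈ (A \ H).powerset, f H φ =
      ∑ S ∈ A.powerset, ∑ φ ∈ S.powerset, f (S \ φ) φ := by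
  rw [sum_sigma', sum_sigma']
  refine sum_nbij' (fun p ↦ ⟨p.1 ∪ p.2, p.2⟩) (fun p ↦ ⟨p.1 \ p.2, p.2⟩) ?_ ?_ ?_ ?_ ?_
  · rintro ⟨H, φ⟩ h
    simp only [mem_sigma, mem_powerset, subset_sdiff] at h ⊢
    exact ⟨union_subset h.1 h.2.1, subset_union_right⟩
  · rintro ⟨S, φ⟩ h
    simp only [mem_sigma, mem_powerset, subset_sdiff] at h ⊢
    exact ⟨sdiff_subset.trans h.1, h.2.trans h.1, disjoint_sdiff⟩
  · rintro ⟨H, φ⟩ h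
    simp only [mem_sigma, mem_powerset, subset_sdiff] at h
    simp [union_sdiff_cancel_right h.2.2.symm]
  · rintro ⟨S, φ⟩ h
    simp only [mem_sigma, mem_powerset] at h
    simp [sdiff_union_of_subset h.2]
  · rintro ⟨H, φ⟩ h
    simp only [mem_sigma, mem_powerset, subset_sdiff] at h
    simp [union_sdiff_cancel_right h.2.2.symm]

theorem sum_powerset_neg_one_pow_card' {R : Type*} [Ring R] (S : Finset ι) :
    ∑ φ ∈ S.powerset, (-1 : R) ^ #φ = if S = ∅ then 1 else 0 := by
  exact_mod_cast congrArg (Int.cast : ℤ → R) sum_powerset_neg_one_pow_card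

end Finset

theorem sum_inclusion_exclusion_eq_one_general
    {ι : Type*} [DecidableEq ι] (A : Finset ι) (i : ι)
    (r : ι → ℝ) (hri : 0 < r i) :
    ∑ H ∈ A.powerset, ∑ φ ∈ (A \ H).powerset,
        (-1 : ℝ) ^ φ.card * r i / (r i + ∑ j ∈ H, r j + ∑ p ∈ φ, r p) = 1 := by
  have regroup : ∀ S ∈ A.powerset, ∑ φ ∈ S.powerset,
      (-1 : ℝ) ^ #φ * r i / (r i + ∑ j ∈ S \ φ, r j + ∑ p ∈ φ, r p) =
        (if S = ∅ then 1 else 0) * (r i / (r i + ∑ j ∈ S, r j)) := by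
    intro S _
    rw [← sum_powerset_neg_one_pow_card', sum_mul]
    refine sum_congr rfl fun φ hφ ↦ ?_
    rw [add_assoc, sum_sdiff (mem_powerset.mp hφ), mul_div_assoc]
  rw [sum_powerset_sum_powerset_sdiff, sum_congr rfl regroup]
  simp [hri.ne']

/-- Partition-of-unity identity for the closed-form probabilities of the ONETS
regret analysis: summing the inclusion–exclusion expressions over all `H ⊆ A`
gives `1`. -/
theorem sum_inclusion_exclusion_eq_one
    {ι : Type*} [DecidableEq ι] (A : Finset ι) (i : ι) (hi : i ∉ A)
    (r : ι → ℝ) (hri : 0 < r i) (hr : ∀ j ∈ A, 0 < r j) :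
    ∑ H ∈ A.powerset, ∑ φ ∈ (A \ H).powerset,
        (-1 : ℝ) ^ φ.card * r i / (r i + ∑ j ∈ H, r j + ∑ p ∈ φ, r p) = 1 :=
  sum_inclusion_exclusion_eq_one_general A i r hri
end

section
/- Let A be a finite index set, let i ∉ A, let H ⊆ A, and let r_i > 0 and r_j > 0 for all j ∈ A be positive reals. Then the alternating sum Σ_{φ ⊆ A∖H} (−1)^{|φ|} · r_i / ( r_i + Σ_{j ∈ H} r_j + Σ_{p ∈ φ} r_p ) lies in the closed interval [0, 1]. -/
/-! Writing `1 / c = ∫₀^∞ e^{-ct} dt` and expanding `∏_{p ∈ A∖H} (1 - e^{-r_p t})` over subsets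
turns the alternating sum into `∫₀^∞ r_i e^{-st} ∏_{p ∈ A∖H} (1 - e^{-r_p t}) dt`, where
`s = r_i + ∑_{j ∈ H} r_j`. For `t ≥ 0` the integrand lies between `0` and `r_i e^{-r_i t}`,
whose integral is `1`. -/

open Finset MeasureTheory Set Real

theorem integral_Ioi_exp_neg_mul {s : ℝ} (hs : 0 < s) :
    ∫ t in Ioi (0 : ℝ), exp (-s * t) = s⁻¹ := by
  rw [integral_exp_mul_Ioi (neg_neg_of_pos hs) 0]
  simp

theorem Finset.prod_one_sub_eq_sum_powerset {ι R : Type*} [CommRing R] (B : Finset ι)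
    (x : ι → R) :
    ∏ p ∈ B, (1 - x p) = ∑ φ ∈ B.powerset, (-1) ^ φ.card * ∏ p ∈ φ, x p := by
  simp_rw [sub_eq_add_neg, prod_one_add]
  refine sum_congr rfl fun φ _ => ?_
  rw [← prod_const, ← prod_mul_distrib]
  exact prod_congr rfl fun _ _ => neg_eq_neg_one_mul _

theorem sum_powerset_neg_one_pow_mul_exp {ι : Type*} (B : Finset ι) (w : ι → ℝ) (s t : ℝ) :
    ∑ φ ∈ B.powerset, (-1) ^ φ.card * exp (-(s + ∑ p ∈ φ, w p) * t)
      = exp (-s * t) * ∏ p ∈ B, (1 - exp (-w p * t)) := by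
  rw [prod_one_sub_eq_sum_powerset, mul_sum]
  refine sum_congr rfl fun φ _ => ?_
  rw [← exp_sum, mul_left_comm, ← exp_add, neg_add, add_mul]
  simp only [neg_mul, sum_mul, sum_neg_distrib]

theorem exp_neg_mul_mul_prod_one_sub_exp_mem_Icc {ι : Type*} {B : Finset ι} {w : ι → ℝ}
    (hw : ∀ p ∈ B, 0 ≤ w p) (s : ℝ) {t : ℝ} (ht : 0 ≤ t) :
    exp (-s * t) * ∏ p ∈ B, (1 - exp (-w p * t)) ∈ Icc 0 (exp (-s * t)) := by
  have hfactor : ∀ p ∈ B, 0 ≤ 1 - exp (-w p * t) ∧ 1 - exp (-w p * t) ≤ 1 := fun p hp =>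
    ⟨sub_nonneg.2 (exp_le_one_iff.2 (by nlinarith [hw p hp])), by linarith [exp_pos (-w p * t)]⟩
  refine ⟨mul_nonneg (exp_pos _).le (prod_nonneg fun p hp => (hfactor p hp).1), ?_⟩
  exact mul_le_of_le_one_right (exp_pos _).le
    (prod_le_one (fun p hp => (hfactor p hp).1) fun p hp => (hfactor p hp).2)

theorem sum_powerset_neg_one_pow_div_eq_integral {ι : Type*} {B : Finset ι} {w : ι → ℝ}
    {s : ℝ} (hs : 0 < s) (hw : ∀ p ∈ B, 0 ≤ w p) :
    ∑ φ ∈ B.powerset, (-1) ^ φ.card / (s + ∑ p ∈ φ, w p)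
      = ∫ t in Ioi (0 : ℝ), exp (-s * t) * ∏ p ∈ B, (1 - exp (-w p * t)) := by
  have hpos : ∀ φ ∈ B.powerset, 0 < s + ∑ p ∈ φ, w p := fun φ hφ =>
    add_pos_of_pos_of_nonneg hs (sum_nonneg fun p hp => hw p (mem_powerset.1 hφ hp))
  simp_rw [← sum_powerset_neg_one_pow_mul_exp]
  rw [integral_finsetSum _ fun φ hφ =>
    (integrableOn_exp_mul_Ioi (neg_neg_of_pos (hpos φ hφ)) 0).const_mul _]
  refine sum_congr rfl fun φ hφ => ?_
  rw [integral_const_mul, integral_Ioi_exp_neg_mul (hpos φ hφ), div_eq_mul_inv]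

theorem sum_powerset_neg_one_pow_div_mem_Icc {ι : Type*} {B : Finset ι} {w : ι → ℝ}
    {s : ℝ} (hs : 0 < s) (hw : ∀ p ∈ B, 0 ≤ w p) :
    ∑ φ ∈ B.powerset, (-1) ^ φ.card / (s + ∑ p ∈ φ, w p) ∈ Icc 0 s⁻¹ := by
  have hbound := fun t (ht : t ∈ Ioi (0 : ℝ)) =>
    exp_neg_mul_mul_prod_one_sub_exp_mem_Icc hw s (le_of_lt ht)
  have hexp : IntegrableOn (fun t => exp (-s * t)) (Ioi 0) :=
    integrableOn_exp_mul_Ioi (neg_neg_of_pos hs) 0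
  have hint : IntegrableOn (fun t => exp (-s * t) * ∏ p ∈ B, (1 - exp (-w p * t))) (Ioi 0) :=
    hexp.mono' (by fun_prop) <| (ae_restrict_iff' measurableSet_Ioi).2 <| .of_forall
      fun t ht => by rw [Real.norm_of_nonneg (hbound t ht).1]; exact (hbound t ht).2
  rw [sum_powerset_neg_one_pow_div_eq_integral hs hw, ← integral_Ioi_exp_neg_mul hs]
  exact ⟨setIntegral_nonneg measurableSet_Ioi fun t ht => (hbound t ht).1,
    setIntegral_mono_on hint hexp measurableSet_Ioi fun t ht => (hbound t ht).2⟩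

theorem alternating_sum_mem_unitInterval_general
    {ι : Type*} [DecidableEq ι] (A : Finset ι) (i : ι)
    (H : Finset ι) (hH : H ⊆ A)
    (r : ι → ℝ) (hri : 0 < r i) (hr : ∀ j ∈ A, 0 < r j) :
    (∑ φ ∈ (A \ H).powerset,
        (-1 : ℝ) ^ φ.card * r i / (r i + ∑ j ∈ H, r j + ∑ p ∈ φ, r p))
      ∈ Set.Icc (0 : ℝ) 1 := by
  set s := r i + ∑ j ∈ H, r j
  have hs : r i ≤ s := le_add_of_nonneg_right (sum_nonneg fun j hj => (hr j (hH hj)).le)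
  obtain ⟨hlo, hhi⟩ := sum_powerset_neg_one_pow_div_mem_Icc (B := A \ H) (w := r)
    (hri.trans_le hs) fun p hp => (hr p (sdiff_subset hp)).le
  simp_rw [mul_comm _ (r i), mul_div_assoc, ← mul_sum]
  refine ⟨mul_nonneg hri.le hlo, ?_⟩
  calc r i * _ ≤ r i * s⁻¹ := mul_le_mul_of_nonneg_left hhi hri.le
    _ ≤ 1 := mul_inv_le_one_of_le₀ hs (hri.trans_le hs).le

/-- Each inner alternating sum of the ONETS regret upper bound (Eq. (7)) — the
probability that exactly the variables indexed by `H` exceed the one indexed by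
`i` — lies in `[0, 1]`. -/
theorem alternating_sum_mem_unitInterval
    {ι : Type*} [DecidableEq ι] (A : Finset ι) (i : ι) (hi : i ∉ A)
    (H : Finset ι) (hH : H ⊆ A)
    (r : ι → ℝ) (hri : 0 < r i) (hr : ∀ j ∈ A, 0 < r j) :
    (∑ φ ∈ (A \ H).powerset,
        (-1 : ℝ) ^ φ.card * r i / (r i + ∑ j ∈ H, r j + ∑ p ∈ φ, r p))
      ∈ Set.Icc (0 : ℝ) 1 :=
  alternating_sum_mem_unitInterval_general A i H hH r hri hr
end
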